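/- arXiv:1707.05852 — 2 statements merged into one kernel-verified Lean document; each statement's English description precedes it below -/
import Mathlib

section
/- Every global minimizer (a*, b*) of the two-estimator cost J satisfies a* ≠ b*, both Voronoi regions have positive measure (μ(V₁(a*, b*)) > 0 and μ(V₂(a*, b*)) > 0), and each estimator is the centroid of its own Voronoi region: a* · μ(V₁(a*, b*)) = ∫_{V₁(a*, b*)} x dμ(x) and b* · μ(V₂(a*, b*)) = ∫_{V₂(a*, b*)} x dμ(x). -/
/-!
Parallel axis theorem: over any set `s` of positive mass, the cost `∫ₛ ‖p - x‖²` of a point `p`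
equals the cost of the centroid of `s` plus `μ(s) ‖p - centroid‖²`. Freezing one estimator of a
minimizer therefore pins the other to the centroid of its Voronoi cell. Cutting `μ` by the
hyperplane `{f = mean of f}` for a linear functional `f` gives two half-spaces of positive mass
(the hyperplane is Lebesgue-null) with distinct centroids; the pair of centroids strictly beats
every single point, so a minimizer cannot collapse to one point or leave a cell empty.
-/

open MeasureTheory Set
open scoped RealInnerProductSpace

theorem ContinuousLinearMap.map_average {α E F : Type*} [MeasurableSpace α] {μ : Measure α}
    [NormedAddCommGroup E] [NormedSpace ℝ E] [CompleteSpace E]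
    [NormedAddCommGroup F] [NormedSpace ℝ F] [CompleteSpace F]
    (L : E →L[ℝ] F) {φ : α → E} (hφ : Integrable φ μ) :
    L (⨍ x, φ x ∂μ) = ⨍ x, L (φ x) ∂μ := by
  rw [average_eq, average_eq, L.map_smul, L.integral_comp_comm hφ]

theorem addHaar_preimage_singleton_eq_zero {E : Type*} [NormedAddCommGroup E] [NormedSpace ℝ E]
    [MeasurableSpace E] [BorelSpace E] [FiniteDimensional ℝ E] (ν : Measure E)
    [ν.IsAddHaarMeasure] {f : E →L[ℝ] ℝ} (hf : f ≠ 0) (c : ℝ) : ν (f ⁻¹' {c}) = 0 := by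
  rcases (f ⁻¹' {c}).eq_empty_or_nonempty with h | ⟨x₀, rfl⟩
  · rw [h, measure_empty]
  have hker : f ⁻¹' {f x₀} = (· + -x₀) ⁻¹' (LinearMap.ker (f : E →ₗ[ℝ] ℝ)) := by
    ext x
    simp [add_neg_eq_zero]
  rw [hker, measure_preimage_add_right]
  refine Measure.addHaar_submodule ν _ fun htop => hf ?_
  exact ContinuousLinearMap.coe_injective (LinearMap.ker_eq_top.1 htop)

theorem exists_setAverage_ne_setAverage_compl {E : Type*} [NormedAddCommGroup E]
    [NormedSpace ℝ E] [CompleteSpace E] [MeasurableSpace E] [BorelSpace E] {μ : Measure E}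
    [IsFiniteMeasure μ] (hμ₀ : μ ≠ 0) (hid : Integrable (fun x => x) μ)
    (f : E →L[ℝ] ℝ) (hf : ∀ c, μ (f ⁻¹' {c}) = 0) :
    ∃ s, MeasurableSet s ∧ μ s ≠ 0 ∧ μ sᶜ ≠ 0 ∧ ⨍ x in s, x ∂μ ≠ ⨍ x in sᶜ, x ∂μ := by
  set t := ⨍ x, f x ∂μ
  have hfi : Integrable (fun x => f x) μ := f.integrable_comp hid
  set s := {x | f x < t}
  have hs : MeasurableSet s := measurableSet_lt f.continuous.measurable measurable_const
  have hs₀ : μ s ≠ 0 := by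
    have hdiff : s = {x | f x ≤ t} \ f ⁻¹' {t} := by
      ext x
      simp [s, lt_iff_le_and_ne]
    rw [hdiff, measure_sdiff_null (hf t)]
    exact (measure_le_average_pos hμ₀ hfi).ne'
  have hsc : sᶜ = {x | t ≤ f x} := by
    ext x
    simp [s]
  have hsc₀ : μ sᶜ ≠ 0 := hsc ▸ (measure_average_le_pos hμ₀ hfi).ne'
  refine ⟨s, hs, hs₀, hsc₀, fun h => ?_⟩
  obtain ⟨x, hxs, hx⟩ := exists_setAverage_le hs₀ (measure_ne_top μ s) hfi.integrableOn
  obtain ⟨y, hys, hy⟩ := exists_le_setAverage hsc₀ (measure_ne_top μ sᶜ) hfi.integrableOn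
  have hfx : f x < t := hxs
  have hfy : t ≤ f y := not_lt.1 hys
  -- the hyperplane separates the centroids: `f (⨍ₛ x) ≤ f x < t ≤ f y ≤ f (⨍_{sᶜ} x)`
  have hfh := congrArg f h
  rw [f.map_average hid.integrableOn, f.map_average hid.integrableOn] at hfh
  linarith

variable {E : Type*} [NormedAddCommGroup E] [MeasurableSpace E]

noncomputable def twoPointCost (μ : Measure E) (a b : E) : ℝ :=
  ∫ x, min (‖a - x‖ ^ 2) (‖b - x‖ ^ 2) ∂μ

def voronoiCell (a b : E) : Set E := {x | ‖a - x‖ < ‖b - x‖}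

variable {μ : Measure E}

theorem twoPointCost_comm (a b : E) : twoPointCost μ a b = twoPointCost μ b a := by
  simp only [twoPointCost, min_comm]

theorem twoPointCost_self (a : E) : twoPointCost μ a a = ∫ x, ‖a - x‖ ^ 2 ∂μ := by
  simp only [twoPointCost, min_self]

theorem ne_of_forall_twoPointCost_lt {a b : E}
    (hlt : ∀ p, twoPointCost μ a b < ∫ x, ‖p - x‖ ^ 2 ∂μ) : a ≠ b := by
  rintro rfl
  exact (hlt a).ne (twoPointCost_self a)

variable [BorelSpace E]

theorem measurableSet_voronoiCell (a b : E) : MeasurableSet (voronoiCell a b) :=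
  measurableSet_lt (by fun_prop) (by fun_prop)

variable [SecondCountableTopology E]

theorem memLp_two_id_of_integrable_norm_sq (hμ : Integrable (fun x => ‖x‖ ^ 2) μ) :
    MemLp id 2 μ :=
  (memLp_two_iff_integrable_sq_norm aestronglyMeasurable_id).2 hμ

variable [IsFiniteMeasure μ]

theorem integrable_id_of_integrable_norm_sq (hμ : Integrable (fun x => ‖x‖ ^ 2) μ) :
    Integrable (fun x => x) μ :=
  (memLp_two_id_of_integrable_norm_sq hμ).integrable one_le_two

theorem integrable_norm_sub_sq (hμ : Integrable (fun x => ‖x‖ ^ 2) μ) (a : E) :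
    Integrable (fun x => ‖a - x‖ ^ 2) μ :=
  ((memLp_const a).sub (memLp_two_id_of_integrable_norm_sq hμ)).integrable_norm_pow two_ne_zero

theorem twoPointCost_le_setIntegral_add (hμ : Integrable (fun x => ‖x‖ ^ 2) μ) (a b : E)
    {s : Set E} (hs : MeasurableSet s) :
    twoPointCost μ a b ≤ ∫ x in s, ‖a - x‖ ^ 2 ∂μ + ∫ x in sᶜ, ‖b - x‖ ^ 2 ∂μ := by
  have hmin : Integrable (fun x => min (‖a - x‖ ^ 2) (‖b - x‖ ^ 2)) μ :=
    (integrable_norm_sub_sq hμ a).inf (integrable_norm_sub_sq hμ b)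
  rw [twoPointCost, ← integral_add_compl hs hmin]
  exact add_le_add
    (setIntegral_mono_on hmin.integrableOn (integrable_norm_sub_sq hμ a).integrableOn hs
      fun x _ => min_le_left _ _)
    (setIntegral_mono_on hmin.integrableOn (integrable_norm_sub_sq hμ b).integrableOn hs.compl
      fun x _ => min_le_right _ _)

theorem twoPointCost_eq_setIntegral_add (hμ : Integrable (fun x => ‖x‖ ^ 2) μ) (a b : E) :
    twoPointCost μ a b =
      ∫ x in voronoiCell a b, ‖a - x‖ ^ 2 ∂μ + ∫ x in (voronoiCell a b)ᶜ, ‖b - x‖ ^ 2 ∂μ := by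
  have hV := measurableSet_voronoiCell a b
  have hmin : Integrable (fun x => min (‖a - x‖ ^ 2) (‖b - x‖ ^ 2)) μ :=
    (integrable_norm_sub_sq hμ a).inf (integrable_norm_sub_sq hμ b)
  rw [twoPointCost, ← integral_add_compl hV hmin]
  congr 1
  · refine setIntegral_congr_fun hV fun x hx => min_eq_left ?_
    exact pow_le_pow_left₀ (norm_nonneg _) (le_of_lt hx) 2
  · refine setIntegral_congr_fun hV.compl fun x hx => min_eq_right ?_
    exact pow_le_pow_left₀ (norm_nonneg _) (not_lt.1 hx) 2

theorem measure_voronoiCell_pos (hμ : Integrable (fun x => ‖x‖ ^ 2) μ) {a b : E}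
    (hlt : ∀ p, twoPointCost μ a b < ∫ x, ‖p - x‖ ^ 2 ∂μ) : 0 < μ (voronoiCell a b) := by
  refine pos_iff_ne_zero.2 fun h₀ => (hlt b).ne ?_
  rw [twoPointCost_eq_setIntegral_add hμ, Measure.restrict_eq_zero.2 h₀, integral_zero_measure,
    zero_add, (Measure.restrict_eq_self_of_ae_mem (compl_mem_ae_iff.2 h₀) :
      μ.restrict (voronoiCell a b)ᶜ = μ)]

variable [InnerProductSpace ℝ E] [CompleteSpace E]

theorem integral_norm_sub_sq (hμ : Integrable (fun x => ‖x‖ ^ 2) μ) (a : E) :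
    ∫ x, ‖a - x‖ ^ 2 ∂μ = μ.real univ * ‖a‖ ^ 2 - 2 * ⟪a, ∫ x, x ∂μ⟫ + ∫ x, ‖x‖ ^ 2 ∂μ := by
  have hinner : Integrable (fun x => 2 * ⟪a, x⟫) μ :=
    ((innerSL ℝ a).integrable_comp (integrable_id_of_integrable_norm_sq hμ)).const_mul 2
  simp_rw [norm_sub_sq_real]
  rw [integral_add (f := fun x => ‖a‖ ^ 2 - 2 * ⟪a, x⟫) ((integrable_const _).sub hinner) hμ,
    integral_sub (integrable_const _) hinner, integral_const, integral_const_mul,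
    integral_inner (integrable_id_of_integrable_norm_sq hμ), smul_eq_mul]

theorem integral_norm_sub_sq_eq_add (hμ : Integrable (fun x => ‖x‖ ^ 2) μ) (p : E) :
    ∫ x, ‖p - x‖ ^ 2 ∂μ =
      ∫ x, ‖(⨍ y, y ∂μ) - x‖ ^ 2 ∂μ + μ.real univ * ‖p - ⨍ y, y ∂μ‖ ^ 2 := by
  rw [integral_norm_sub_sq hμ, integral_norm_sub_sq hμ, ← measure_smul_average μ fun x => x,
    norm_sub_sq_real]
  simp only [real_inner_smul_right, real_inner_self_eq_norm_sq]
  ring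

theorem eq_average_of_forall_integral_norm_sub_sq_le (hμ : Integrable (fun x => ‖x‖ ^ 2) μ)
    (hμ₀ : μ ≠ 0) {a : E} (ha : ∀ c, ∫ x, ‖a - x‖ ^ 2 ∂μ ≤ ∫ x, ‖c - x‖ ^ 2 ∂μ) :
    a = ⨍ x, x ∂μ := by
  have hmass : 0 < μ.real univ := by
    simpa [measureReal_def, ENNReal.toReal_pos_iff, pos_iff_ne_zero] using hμ₀
  have hle := ha (⨍ x, x ∂μ)
  rw [integral_norm_sub_sq_eq_add hμ a] at hle
  have : ‖a - ⨍ x, x ∂μ‖ ^ 2 ≤ 0 := by nlinarith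
  simpa [sub_eq_zero] using this

theorem measureReal_voronoiCell_smul_eq_setIntegral (hμ : Integrable (fun x => ‖x‖ ^ 2) μ)
    {a b : E} (hmin : ∀ c, twoPointCost μ a b ≤ twoPointCost μ c b)
    (hpos : 0 < μ (voronoiCell a b)) :
    μ.real (voronoiCell a b) • a = ∫ x in voronoiCell a b, x ∂μ := by
  have hcell (c : E) : ∫ x in voronoiCell a b, ‖a - x‖ ^ 2 ∂μ ≤
      ∫ x in voronoiCell a b, ‖c - x‖ ^ 2 ∂μ := by
    have := twoPointCost_le_setIntegral_add hμ c b (measurableSet_voronoiCell a b)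
    linarith [hmin c, twoPointCost_eq_setIntegral_add hμ a b]
  have hcentroid := eq_average_of_forall_integral_norm_sub_sq_le hμ.restrict
    (by simpa using hpos.ne') hcell
  rw [← measure_smul_setAverage _ (measure_ne_top μ _), ← hcentroid]

theorem twoPointCost_setAverage_lt (hμ : Integrable (fun x => ‖x‖ ^ 2) μ) {s : Set E}
    (hs : MeasurableSet s) (hs₀ : μ s ≠ 0) (hsc₀ : μ sᶜ ≠ 0)
    (hne : ⨍ x in s, x ∂μ ≠ ⨍ x in sᶜ, x ∂μ) (p : E) :
    twoPointCost μ (⨍ x in s, x ∂μ) (⨍ x in sᶜ, x ∂μ) < ∫ x, ‖p - x‖ ^ 2 ∂μ := by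
  set c₁ := ⨍ x in s, x ∂μ
  set c₂ := ⨍ x in sᶜ, x ∂μ
  have hm₁ : 0 < μ.real s := ENNReal.toReal_pos hs₀ (measure_ne_top μ s)
  have hm₂ : 0 < μ.real sᶜ := ENNReal.toReal_pos hsc₀ (measure_ne_top μ sᶜ)
  have hgain : 0 < μ.real s * ‖p - c₁‖ ^ 2 + μ.real sᶜ * ‖p - c₂‖ ^ 2 := by
    rcases eq_or_ne p c₁ with rfl | hp
    · have : 0 < ‖c₁ - c₂‖ := norm_pos_iff.2 (sub_ne_zero.2 hne)
      positivity
    · have : 0 < ‖p - c₁‖ := norm_pos_iff.2 (sub_ne_zero.2 hp)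
      positivity
  have h₁ := integral_norm_sub_sq_eq_add (μ := μ.restrict s) hμ.restrict p
  have h₂ := integral_norm_sub_sq_eq_add (μ := μ.restrict sᶜ) hμ.restrict p
  rw [measureReal_restrict_apply_univ] at h₁ h₂
  calc twoPointCost μ c₁ c₂
      ≤ ∫ x in s, ‖c₁ - x‖ ^ 2 ∂μ + ∫ x in sᶜ, ‖c₂ - x‖ ^ 2 ∂μ :=
        twoPointCost_le_setIntegral_add hμ c₁ c₂ hs
    _ < ∫ x in s, ‖p - x‖ ^ 2 ∂μ + ∫ x in sᶜ, ‖p - x‖ ^ 2 ∂μ := by linarith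
    _ = ∫ x, ‖p - x‖ ^ 2 ∂μ := integral_add_compl hs (integrable_norm_sub_sq hμ p)

theorem exists_forall_twoPointCost_lt (hμ₀ : μ ≠ 0) (hμ : Integrable (fun x => ‖x‖ ^ 2) μ)
    (f : E →L[ℝ] ℝ) (hf : ∀ c, μ (f ⁻¹' {c}) = 0) :
    ∃ a b, ∀ p, twoPointCost μ a b < ∫ x, ‖p - x‖ ^ 2 ∂μ := by
  obtain ⟨s, hs, hs₀, hsc₀, hne⟩ :=
    exists_setAverage_ne_setAverage_compl hμ₀ (integrable_id_of_integrable_norm_sq hμ) f hf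
  exact ⟨_, _, twoPointCost_setAverage_lt hμ hs hs₀ hsc₀ hne⟩

/-- **Necessary conditions for global heterarchical minimizers.**
Every global minimizer `(a*, b*)` of the two-estimator cost satisfies `a* ≠ b*`,
both Voronoi regions have positive measure, and each estimator is the centroid of
its own Voronoi region. -/
theorem heterarchical_minimizer_is_centroidal
    (n : ℕ) (hn : 1 ≤ n)
    (μ : Measure (EuclideanSpace ℝ (Fin n))) [IsProbabilityMeasure μ]
    (hac : μ ≪ volume)
    (hmom : Integrable (fun x => ‖x‖ ^ 2) μ)
    (astar bstar : EuclideanSpace ℝ (Fin n))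
    (hmin : ∀ a b : EuclideanSpace ℝ (Fin n),
        ∫ x, min (‖astar - x‖ ^ 2) (‖bstar - x‖ ^ 2) ∂μ ≤
          ∫ x, min (‖a - x‖ ^ 2) (‖b - x‖ ^ 2) ∂μ) :
    astar ≠ bstar ∧
      0 < μ {x | ‖astar - x‖ < ‖bstar - x‖} ∧
      0 < μ {x | ‖bstar - x‖ < ‖astar - x‖} ∧
      (μ {x | ‖astar - x‖ < ‖bstar - x‖}).toReal • astar =
        ∫ x in {x | ‖astar - x‖ < ‖bstar - x‖}, x ∂μ ∧
      (μ {x | ‖bstar - x‖ < ‖astar - x‖}).toReal • bstar =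
        ∫ x in {x | ‖bstar - x‖ < ‖astar - x‖}, x ∂μ := by
  have : Nonempty (Fin n) := ⟨⟨0, hn⟩⟩
  obtain ⟨v, hv⟩ := exists_ne (0 : EuclideanSpace ℝ (Fin n))
  have hf : innerSL ℝ v ≠ 0 := fun h => hv (by simpa using congr($h v))
  obtain ⟨a, b, hab⟩ := exists_forall_twoPointCost_lt (IsProbabilityMeasure.ne_zero μ) hmom
    (innerSL ℝ v) fun c => hac (addHaar_preimage_singleton_eq_zero volume hf c)
  have hlt : ∀ p, twoPointCost μ astar bstar < ∫ x, ‖p - x‖ ^ 2 ∂μ :=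
    fun p => (hmin a b).trans_lt (hab p)
  have hlt' : ∀ p, twoPointCost μ bstar astar < ∫ x, ‖p - x‖ ^ 2 ∂μ :=
    fun p => (twoPointCost_comm bstar astar).trans_lt (hlt p)
  have hV₁ := measure_voronoiCell_pos hmom hlt
  have hV₂ := measure_voronoiCell_pos hmom hlt'
  exact ⟨ne_of_forall_twoPointCost_lt hlt, hV₁, hV₂,
    measureReal_voronoiCell_smul_eq_setIntegral hmom (fun c => hmin c bstar) hV₁,
    measureReal_voronoiCell_smul_eq_setIntegral hmom
      (fun c => (twoPointCost_comm bstar astar).trans_le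
        ((hmin astar c).trans_eq (twoPointCost_comm astar c))) hV₂⟩
end

section
/- Let χ* be the unique positive real solution of φ(χ) = 2χ(1 − Φ(χ)). Then the function b ↦ J(m, b) attains its global minimum over ℝ exactly at b = m + 2χ*σ and b = m − 2χ*σ, and the minimal value is J(m, m + 2χ*σ) = σ²(1 − 2χ* φ(χ*)), which is strictly less than σ². -/
open MeasureTheory ProbabilityTheory

/-- The standard normal probability density function. -/
noncomputable def stdGaussianPDF (x : ℝ) : ℝ :=
  Real.exp (-x ^ 2 / 2) / Real.sqrt (2 * Real.pi)

/-- The standard normal cumulative distribution function. -/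
noncomputable def stdGaussianCDF (x : ℝ) : ℝ :=
  ∫ t in Set.Iic x, stdGaussianPDF t

/-!
Substituting `x = m + σz` gives `J(m, b) = σ² G((b - m)/σ)` with
`G(c) = ∫ φ(z) min(z², (c - z)²) dz`, an even function of `c`. Splitting at `z = c/2` and using
`∫_χ^∞ φ = 1 - Φ(χ)`, `∫_χ^∞ zφ = φ(χ)`, `∫ z²φ = 1` gives
`G(2χ) = 1 - 4χφ(χ) + 4χ²(1 - Φ(χ))` for `χ ≥ 0`, whose derivative is `4(2χ(1 - Φ(χ)) - φ(χ))`.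
This is negative at `0` and, by Mills' ratio `φ(χ) ≤ (χ + 1/χ)(1 - Φ(χ))`, positive for `χ > 1`;
since `χ*` is its only positive zero, it changes sign exactly at `χ*`, so `χ*` is the strict
minimiser of `G(2χ)` on `[0, ∞)`. The stationarity equation turns `G(2χ*)` into `1 - 2χ*φ(χ*)`.
-/

open Real Set Filter Topology

lemma stdGaussianPDF_eq_gaussianPDFReal : stdGaussianPDF = gaussianPDFReal 0 1 := by
  funext x
  simp [stdGaussianPDF, gaussianPDFReal, div_eq_mul_inv, mul_comm]

lemma stdGaussianPDF_pos (x : ℝ) : 0 < stdGaussianPDF x := by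
  rw [stdGaussianPDF_eq_gaussianPDFReal]
  exact gaussianPDFReal_pos 0 1 x one_ne_zero

lemma stdGaussianPDF_neg (x : ℝ) : stdGaussianPDF (-x) = stdGaussianPDF x := by
  simp [stdGaussianPDF]

lemma continuous_stdGaussianPDF : Continuous stdGaussianPDF := by
  unfold stdGaussianPDF
  fun_prop

lemma hasDerivAt_stdGaussianPDF (x : ℝ) :
    HasDerivAt stdGaussianPDF (-x * stdGaussianPDF x) x := by
  have h : HasDerivAt (fun y : ℝ => -y ^ 2 / 2) (-x) x := by
    simpa using ((hasDerivAt_pow 2 x).neg.div_const 2).congr_deriv (by ring)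
  exact (h.exp.div_const _).congr_deriv (by unfold stdGaussianPDF; ring)

lemma tendsto_stdGaussianPDF_atTop : Tendsto stdGaussianPDF atTop (𝓝 0) := by
  have h : Tendsto (fun x : ℝ => -x ^ 2 / 2) atTop atBot :=
    (tendsto_neg_atTop_atBot.comp (tendsto_pow_atTop two_ne_zero)).atBot_div_const two_pos
  have h' := (tendsto_exp_atBot.comp h).div_const (√(2 * π))
  rw [zero_div] at h'
  exact h'

lemma stdGaussianPDF_eq_exp_div (x : ℝ) :
    stdGaussianPDF x = exp (-(1 / 2) * x ^ 2) / √(2 * π) := by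
  unfold stdGaussianPDF
  ring_nf

lemma integrable_stdGaussianPDF : Integrable stdGaussianPDF := by
  rw [stdGaussianPDF_eq_gaussianPDFReal]
  exact integrable_gaussianPDFReal 0 1

lemma integrable_mul_stdGaussianPDF : Integrable fun x => x * stdGaussianPDF x := by
  simp_rw [stdGaussianPDF_eq_exp_div, mul_div_assoc']
  exact (integrable_mul_exp_neg_mul_sq (by norm_num)).div_const _

lemma integrable_sq_mul_stdGaussianPDF : Integrable fun x => x ^ 2 * stdGaussianPDF x := by
  have h := (integrable_rpow_mul_exp_neg_mul_sq (b := 1 / 2) (by norm_num)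
    (by norm_num : (-1 : ℝ) < 2)).div_const (√(2 * π))
  simp_rw [stdGaussianPDF_eq_exp_div, mul_div_assoc']
  exact h.congr (ae_of_all _ fun x => by norm_cast)

lemma integral_stdGaussianPDF : ∫ x, stdGaussianPDF x = 1 := by
  rw [stdGaussianPDF_eq_gaussianPDFReal]
  exact integral_gaussianPDFReal_eq_one 0 one_ne_zero

lemma integral_sq_mul_stdGaussianPDF : ∫ x, x ^ 2 * stdGaussianPDF x = 1 := by
  have hvar := variance_fun_id_gaussianReal (μ := 0) (v := 1)
  rw [variance_eq_integral measurable_id'.aemeasurable, integral_id_gaussianReal] at hvar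
  simp_rw [sub_zero, NNReal.coe_one] at hvar
  rw [← hvar, integral_gaussianReal_eq_integral_smul one_ne_zero, stdGaussianPDF_eq_gaussianPDFReal]
  simp_rw [smul_eq_mul, mul_comm]

lemma integral_Ioi_stdGaussianPDF (a : ℝ) :
    ∫ t in Ioi a, stdGaussianPDF t = 1 - stdGaussianCDF a := by
  have h := intervalIntegral.integral_Iic_add_Ioi (b := a) integrable_stdGaussianPDF.integrableOn
    integrable_stdGaussianPDF.integrableOn
  rw [integral_stdGaussianPDF] at h
  rw [stdGaussianCDF, ← h, add_sub_cancel_left]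

lemma integral_Ioi_mul_stdGaussianPDF (a : ℝ) :
    ∫ t in Ioi a, t * stdGaussianPDF t = stdGaussianPDF a := by
  have h := integral_Ioi_of_hasDerivAt_of_tendsto' (a := a) (f := fun t => -stdGaussianPDF t)
    (fun t _ => (hasDerivAt_stdGaussianPDF t).neg.congr_deriv (by ring))
    integrable_mul_stdGaussianPDF.integrableOn (by simpa using tendsto_stdGaussianPDF_atTop.neg)
  rw [h, zero_sub, neg_neg]

lemma stdGaussianCDF_lt_one (x : ℝ) : stdGaussianCDF x < 1 := by
  have h : 0 < ∫ t in Ioi x, stdGaussianPDF t := by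
    rw [setIntegral_pos_iff_support_of_nonneg_ae
      (ae_of_all _ fun t => (stdGaussianPDF_pos t).le) integrable_stdGaussianPDF.integrableOn,
      Function.support_eq_univ fun t => (stdGaussianPDF_pos t).ne', univ_inter]
    simp
  linarith [integral_Ioi_stdGaussianPDF x]

lemma hasDerivAt_stdGaussianCDF (x : ℝ) : HasDerivAt stdGaussianCDF (stdGaussianPDF x) x := by
  have h : stdGaussianCDF = fun y => stdGaussianCDF 0 + ∫ t in (0 : ℝ)..y, stdGaussianPDF t := by
    funext y
    rw [stdGaussianCDF, stdGaussianCDF, ← intervalIntegral.integral_Iic_sub_Iic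
      integrable_stdGaussianPDF.integrableOn integrable_stdGaussianPDF.integrableOn, add_sub_cancel]
  rw [h]
  exact (intervalIntegral.integral_hasDerivAt_right integrable_stdGaussianPDF.intervalIntegrable
    (continuous_stdGaussianPDF.stronglyMeasurableAtFilter _ _)
    continuous_stdGaussianPDF.continuousAt).const_add _

/-- Mills' ratio bound, from integrating `(1 + t⁻²) φ(t) = (-φ(t) / t)'` over `(a, ∞)`. -/
lemma stdGaussianPDF_le_mul_one_sub_stdGaussianCDF {a : ℝ} (ha : 0 < a) :
    stdGaussianPDF a ≤ (a + a⁻¹) * (1 - stdGaussianCDF a) := by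
  have hderiv : ∀ t ∈ Ici a, HasDerivAt (fun t => -stdGaussianPDF t / t)
      ((1 + t⁻¹ ^ 2) * stdGaussianPDF t) t := fun t ht => by
    have ht0 : t ≠ 0 := (ha.trans_le ht).ne'
    exact ((hasDerivAt_stdGaussianPDF t).neg.div (hasDerivAt_id t) ht0).congr_deriv
      (by simp only [id, Pi.neg_apply]; field_simp; ring)
  have hnonneg : ∀ t ∈ Ioi a, 0 ≤ (1 + t⁻¹ ^ 2) * stdGaussianPDF t :=
    fun t _ => by have := stdGaussianPDF_pos t; positivity
  have hlim : Tendsto (fun t => -stdGaussianPDF t / t) atTop (𝓝 0) := by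
    simpa [div_eq_mul_inv] using tendsto_stdGaussianPDF_atTop.neg.mul tendsto_inv_atTop_zero
  have hle : ∫ t in Ioi a, (1 + t⁻¹ ^ 2) * stdGaussianPDF t ≤
      ∫ t in Ioi a, (1 + a⁻¹ ^ 2) * stdGaussianPDF t := by
    refine setIntegral_mono_on (integrableOn_Ioi_deriv_of_nonneg' hderiv hnonneg hlim)
      (integrable_stdGaussianPDF.const_mul _).integrableOn measurableSet_Ioi fun t ht => ?_
    have ht0 : 0 < t := ha.trans ht
    have := stdGaussianPDF_pos t
    gcongr
    exact le_of_lt ht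
  rw [integral_Ioi_of_hasDerivAt_of_nonneg' hderiv hnonneg hlim, integral_const_mul,
    integral_Ioi_stdGaussianPDF, zero_sub, neg_div, neg_neg] at hle
  calc stdGaussianPDF a = a * (stdGaussianPDF a / a) := (mul_div_cancel₀ _ ha.ne').symm
    _ ≤ a * ((1 + a⁻¹ ^ 2) * (1 - stdGaussianCDF a)) := by gcongr
    _ = (a + a⁻¹) * (1 - stdGaussianCDF a) := by field_simp

noncomputable def stationarityGap (χ : ℝ) : ℝ :=
  2 * χ * (1 - stdGaussianCDF χ) - stdGaussianPDF χ

noncomputable def stdCostProfile (χ : ℝ) : ℝ :=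
  1 - 4 * χ * stdGaussianPDF χ + 4 * χ ^ 2 * (1 - stdGaussianCDF χ)

lemma continuous_stationarityGap : Continuous stationarityGap :=
  ((continuous_const.mul continuous_id).mul (continuous_const.sub
    (continuous_iff_continuousAt.2 fun x => (hasDerivAt_stdGaussianCDF x).continuousAt))).sub
    continuous_stdGaussianPDF

lemma stationarityGap_zero : stationarityGap 0 < 0 := by
  simpa [stationarityGap] using stdGaussianPDF_pos 0

lemma stationarityGap_pos_of_one_lt {χ : ℝ} (hχ : 1 < χ) : 0 < stationarityGap χ := by
  have hχ0 : 0 < χ := one_pos.trans hχ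
  have hinv : χ⁻¹ < χ := (inv_lt_one_of_one_lt₀ hχ).trans hχ
  have htail : 0 < 1 - stdGaussianCDF χ := sub_pos.2 (stdGaussianCDF_lt_one χ)
  have hmills := stdGaussianPDF_le_mul_one_sub_stdGaussianCDF hχ0
  unfold stationarityGap
  linarith [mul_pos (sub_pos.2 hinv) htail]

lemma hasDerivAt_stdCostProfile (χ : ℝ) :
    HasDerivAt stdCostProfile (4 * stationarityGap χ) χ := by
  have hlin : HasDerivAt (fun y => 4 * y) 4 χ := by simpa using (hasDerivAt_id χ).const_mul 4
  have hsq : HasDerivAt (fun y => 4 * y ^ 2) (8 * χ) χ := by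
    simpa using ((hasDerivAt_pow 2 χ).const_mul 4).congr_deriv (by ring)
  have h := ((hlin.mul (hasDerivAt_stdGaussianPDF χ)).const_sub 1).add
    (hsq.mul ((hasDerivAt_stdGaussianCDF χ).const_sub 1))
  exact h.congr_deriv (by unfold stationarityGap; ring)

lemma stdCostProfile_of_stationary {χ : ℝ}
    (hχ : stdGaussianPDF χ = 2 * χ * (1 - stdGaussianCDF χ)) :
    stdCostProfile χ = 1 - 2 * χ * stdGaussianPDF χ := by
  unfold stdCostProfile
  linear_combination (-2 * χ) * hχ

lemma neg_of_lt_of_unique_zero {f : ℝ → ℝ} (hf : Continuous f) {a x₀ x : ℝ} (ha : f a < 0)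
    (hzero : ∀ y, a < y → f y = 0 → y = x₀) (hax : a ≤ x) (hx : x < x₀) : f x < 0 := by
  by_contra! h
  obtain ⟨y, hy, hfy⟩ := intermediate_value_Icc hax hf.continuousOn ⟨ha.le, h⟩
  have hay : a < y := hy.1.lt_of_ne (by rintro rfl; exact ha.ne hfy)
  linarith [hzero y hay hfy, hy.2]

lemma pos_of_lt_of_unique_zero {f : ℝ → ℝ} (hf : Continuous f) {a x₀ x : ℝ}
    (hpos : ∀ᶠ y in atTop, 0 < f y) (hzero : ∀ y, a < y → f y = 0 → y = x₀) (ha : a ≤ x₀)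
    (hx : x₀ < x) : 0 < f x := by
  by_contra! h
  obtain ⟨z, hfz, hxz⟩ := (hpos.and (eventually_ge_atTop x)).exists
  obtain ⟨y, hy, hfy⟩ := intermediate_value_Icc hxz hf.continuousOn ⟨h, hfz.le⟩
  linarith [hzero y (by linarith [hy.1]) hfy, hy.1]

lemma stdCostProfile_lt_of_ne {χs : ℝ} (hχs : 0 < χs)
    (hχuniq : ∀ χ : ℝ, 0 < χ → stdGaussianPDF χ = 2 * χ * (1 - stdGaussianCDF χ) → χ = χs)
    {χ : ℝ} (hχ : 0 ≤ χ) (hne : χ ≠ χs) : stdCostProfile χs < stdCostProfile χ := by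
  have hzero : ∀ y, 0 < y → stationarityGap y = 0 → y = χs :=
    fun y hy h => hχuniq y hy (sub_eq_zero.1 h).symm
  have hcont : Continuous stdCostProfile :=
    continuous_iff_continuousAt.2 fun y => (hasDerivAt_stdCostProfile y).continuousAt
  rcases hne.lt_or_gt with hlt | hgt
  · refine strictAntiOn_of_deriv_neg (convex_Icc 0 χs) hcont.continuousOn (fun y hy => ?_)
      ⟨hχ, hlt.le⟩ ⟨hχs.le, le_rfl⟩ hlt
    rw [interior_Icc] at hy
    rw [(hasDerivAt_stdCostProfile y).deriv]
    linarith [neg_of_lt_of_unique_zero continuous_stationarityGap stationarityGap_zero hzero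
      hy.1.le hy.2]
  · refine strictMonoOn_of_deriv_pos (convex_Ici χs) hcont.continuousOn (fun y hy => ?_)
      self_mem_Ici hgt.le hgt
    rw [interior_Ici] at hy
    rw [(hasDerivAt_stdCostProfile y).deriv]
    linarith [pos_of_lt_of_unique_zero continuous_stationarityGap
      ((eventually_gt_atTop 1).mono fun _ => stationarityGap_pos_of_one_lt) hzero hχs.le hy]

noncomputable def stdCost (c : ℝ) : ℝ :=
  ∫ z, stdGaussianPDF z * min (z ^ 2) ((c - z) ^ 2)

lemma integral_gaussianReal_eq_integral_stdGaussianPDF_smul {E : Type*} [NormedAddCommGroup E]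
    [NormedSpace ℝ E] (m : ℝ) {σ : ℝ} (hσ : σ ≠ 0) (f : ℝ → E) :
    ∫ x, f x ∂gaussianReal m ⟨σ ^ 2, sq_nonneg σ⟩ =
      ∫ z, stdGaussianPDF z • f (σ * z + m) := by
  have hmap :
      (gaussianReal 0 1).map (fun z => σ * z + m) = gaussianReal m ⟨σ ^ 2, sq_nonneg σ⟩ := by
    rw [show (fun z => σ * z + m) = (· + m) ∘ (σ * ·) from rfl,
      ← Measure.map_map (measurable_add_const m) (measurable_const_mul σ),
      gaussianReal_map_const_mul, gaussianReal_map_add_const]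
    congr 1
    · ring
    · exact mul_one _
  have he : MeasurableEmbedding fun z => σ * z + m :=
    ((Homeomorph.mulLeft₀ σ hσ).trans (Homeomorph.addRight m)).measurableEmbedding
  rw [← hmap, he.integral_map, integral_gaussianReal_eq_integral_smul one_ne_zero,
    stdGaussianPDF_eq_gaussianPDFReal]

lemma integral_min_sq_gaussianReal (m b : ℝ) {σ : ℝ} (hσ : σ ≠ 0) :
    ∫ x, min ((m - x) ^ 2) ((b - x) ^ 2) ∂gaussianReal m ⟨σ ^ 2, sq_nonneg σ⟩ =
      σ ^ 2 * stdCost ((b - m) / σ) := by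
  rw [integral_gaussianReal_eq_integral_stdGaussianPDF_smul m hσ, stdCost, ← integral_const_mul]
  congr 1 with z
  have hm : (m - (σ * z + m)) ^ 2 = σ ^ 2 * z ^ 2 := by ring
  have hb : (b - (σ * z + m)) ^ 2 = σ ^ 2 * ((b - m) / σ - z) ^ 2 := by field_simp; ring
  rw [smul_eq_mul, hm, hb, ← mul_min_of_nonneg _ _ (sq_nonneg σ)]
  ring

lemma stdCost_neg (c : ℝ) : stdCost (-c) = stdCost c := by
  rw [stdCost, ← integral_neg_eq_self]
  simp_rw [stdGaussianPDF_neg, neg_sq, neg_sub_neg, sub_sq_comm _ c]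
  rfl

/-- For `c = 2χ ≥ 0` the nearer of `0` and `c` is `c` exactly on `(χ, ∞)`,
where `min(z², (c - z)²) = z² - 4χ(z - χ)`. -/
lemma stdCost_two_mul {χ : ℝ} (hχ : 0 ≤ χ) : stdCost (2 * χ) = stdCostProfile χ := by
  have hmin : ∀ z, stdGaussianPDF z * min (z ^ 2) ((2 * χ - z) ^ 2) =
      z ^ 2 * stdGaussianPDF z - (Ioi χ).indicator
        (fun z => 4 * χ * (z * stdGaussianPDF z) - 4 * χ ^ 2 * stdGaussianPDF z) z := by
    intro z
    by_cases hz : z ∈ Ioi χ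
    · rw [indicator_of_mem hz, min_eq_right (by nlinarith [mem_Ioi.1 hz])]
      ring
    · rw [indicator_of_notMem hz, min_eq_left (by nlinarith [notMem_Ioi.1 hz])]
      ring
  have hint : Integrable fun z => 4 * χ * (z * stdGaussianPDF z) - 4 * χ ^ 2 * stdGaussianPDF z :=
    (integrable_mul_stdGaussianPDF.const_mul _).sub (integrable_stdGaussianPDF.const_mul _)
  simp_rw [stdCost, hmin]
  rw [integral_sub integrable_sq_mul_stdGaussianPDF
      (hint.integrableOn.integrable_indicator measurableSet_Ioi),
    integral_indicator measurableSet_Ioi,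
    integral_sub (integrable_mul_stdGaussianPDF.const_mul _).integrableOn
      (integrable_stdGaussianPDF.const_mul _).integrableOn,
    integral_const_mul, integral_const_mul, integral_sq_mul_stdGaussianPDF,
    integral_Ioi_mul_stdGaussianPDF, integral_Ioi_stdGaussianPDF, stdCostProfile]
  ring

lemma stdCost_eq_stdCostProfile (c : ℝ) : stdCost c = stdCostProfile (|c| / 2) := by
  rw [← stdCost_two_mul (by positivity), mul_div_cancel₀ _ two_ne_zero]
  rcases abs_choice c with h | h <;> rw [h]
  rw [stdCost_neg]

lemma abs_sub_div_div_two_eq_iff {m b σ χ : ℝ} (hσ : σ ≠ 0) (hχ : 0 ≤ χ) :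
    |(b - m) / σ| / 2 = χ ↔ b = m + 2 * χ * σ ∨ b = m - 2 * χ * σ := by
  rw [div_eq_iff two_ne_zero, abs_eq (by positivity), div_eq_iff hσ, div_eq_iff hσ]
  constructor <;> rintro (h | h)
  exacts [.inl (by linarith), .inr (by linarith), .inl (by linarith), .inr (by linarith)]

/-- **Optimal hierarchical estimator in the 1-D Gaussian case.**
Let `χ*` be the unique positive solution of `φ(χ) = 2χ(1 − Φ(χ))`. Then
`b ↦ J(m, b)` attains its global minimum exactly at `b = m + 2χ*σ` and
`b = m − 2χ*σ`, the minimal value being `σ²(1 − 2χ*φ(χ*)) < σ²`. -/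
theorem gaussian_hierarchical_optimal_1D
    (m σ : ℝ) (hσ : 0 < σ)
    (γ : Measure ℝ) (hγ : γ = gaussianReal m ⟨σ ^ 2, sq_nonneg σ⟩)
    (χs : ℝ) (hχpos : 0 < χs)
    (hχeq : stdGaussianPDF χs = 2 * χs * (1 - stdGaussianCDF χs))
    (hχuniq : ∀ χ : ℝ, 0 < χ →
      stdGaussianPDF χ = 2 * χ * (1 - stdGaussianCDF χ) → χ = χs) :
    (∀ b : ℝ,
      ∫ x, min ((m - x) ^ 2) ((m + 2 * χs * σ - x) ^ 2) ∂γ ≤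
        ∫ x, min ((m - x) ^ 2) ((b - x) ^ 2) ∂γ) ∧
    (∀ b : ℝ,
      ∫ x, min ((m - x) ^ 2) ((m - 2 * χs * σ - x) ^ 2) ∂γ ≤
        ∫ x, min ((m - x) ^ 2) ((b - x) ^ 2) ∂γ) ∧
    (∀ b : ℝ,
      (∀ b' : ℝ,
        ∫ x, min ((m - x) ^ 2) ((b - x) ^ 2) ∂γ ≤
          ∫ x, min ((m - x) ^ 2) ((b' - x) ^ 2) ∂γ) →
      b = m + 2 * χs * σ ∨ b = m - 2 * χs * σ) ∧
    ∫ x, min ((m - x) ^ 2) ((m + 2 * χs * σ - x) ^ 2) ∂γ =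
      σ ^ 2 * (1 - 2 * χs * stdGaussianPDF χs) ∧
    σ ^ 2 * (1 - 2 * χs * stdGaussianPDF χs) < σ ^ 2 := by
  have hJ (b : ℝ) : ∫ x, min ((m - x) ^ 2) ((b - x) ^ 2) ∂γ =
      σ ^ 2 * stdCostProfile (|(b - m) / σ| / 2) := by
    rw [hγ, integral_min_sq_gaussianReal m b hσ.ne', stdCost_eq_stdCostProfile]
  have hJ_opt {b : ℝ} (hb : b = m + 2 * χs * σ ∨ b = m - 2 * χs * σ) :
      ∫ x, min ((m - x) ^ 2) ((b - x) ^ 2) ∂γ = σ ^ 2 * stdCostProfile χs := by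
    rw [hJ, (abs_sub_div_div_two_eq_iff hσ.ne' hχpos.le).2 hb]
  have hJ_lt {b : ℝ} (hb : ¬(b = m + 2 * χs * σ ∨ b = m - 2 * χs * σ)) :
      σ ^ 2 * stdCostProfile χs < ∫ x, min ((m - x) ^ 2) ((b - x) ^ 2) ∂γ := by
    rw [hJ]
    exact mul_lt_mul_of_pos_left (stdCostProfile_lt_of_ne hχpos hχuniq (by positivity)
      (mt (abs_sub_div_div_two_eq_iff hσ.ne' hχpos.le).1 hb)) (by positivity)
  have hJ_ge (b : ℝ) : σ ^ 2 * stdCostProfile χs ≤ ∫ x, min ((m - x) ^ 2) ((b - x) ^ 2) ∂γ := by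
    by_cases hb : b = m + 2 * χs * σ ∨ b = m - 2 * χs * σ
    exacts [(hJ_opt hb).ge, (hJ_lt hb).le]
  refine ⟨fun b => (hJ_opt (.inl rfl)).trans_le (hJ_ge b),
    fun b => (hJ_opt (.inr rfl)).trans_le (hJ_ge b), fun b hb => ?_, ?_, ?_⟩
  · by_contra hne
    exact (hJ_lt hne).not_ge ((hb _).trans (hJ_opt (.inl rfl)).le)
  · rw [hJ_opt (.inl rfl), stdCostProfile_of_stationary hχeq]
  · have := mul_pos hχpos (stdGaussianPDF_pos χs)
    exact mul_lt_of_lt_one_right (by positivity) (by linarith)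
end
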